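/- Strict positivity of the flux (the height of the uniformizing rectangle is positive): Let g be the solution of a DN-BVP on a finite connected network with data (I, L, R, N, k), where L and R are nonempty and k > 0. Then H = Σ_{x ∈ R} (∂g/∂n)(I)(x) > 0. -/

import Mathlib

open Finset

variable {V : Type*}

/-- The combinatorial Laplacian of `u` at `x` in a network with conductance `c`. -/
noncomputable def netLap [Fintype V] (G : SimpleGraph V) [DecidableRel G.Adj]
    (c : V → V → ℝ) (u : V → ℝ) (x : V) : ℝ :=
  ∑ y ∈ G.neighborFinset x, c x y * (u x - u y)

/-- The normal derivative of `u` at `x` with respect to the set `F`. -/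
noncomputable def netNormalDeriv [Fintype V] [DecidableEq V] (G : SimpleGraph V)
    [DecidableRel G.Adj] (c : V → V → ℝ) (F : Finset V) (u : V → ℝ) (x : V) : ℝ :=
  ∑ y ∈ (G.neighborFinset x).filter (· ∈ F), c x y * (u x - u y)

/-- The vertex boundary `δF` of `F`: vertices outside `F` adjacent to some vertex of `F`. -/
def netVertexBoundary [Fintype V] [DecidableEq V] (G : SimpleGraph V) [DecidableRel G.Adj]
    (F : Finset V) : Finset V :=
  univ.filter fun x => x ∉ F ∧ ∃ y ∈ F, G.Adj x y

/-
The proof is Green's identity on the network. Summing `g · Δg` over all vertices gives half the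
Dirichlet energy `Σ_x Σ_{y ~ x} c(x,y) (g x - g y)²`. Every term of the left side outside `R` vanishes:
`Δg = 0` on `I`, `g = 0` on `L`, and on `N` (as on `R`) all neighbours lie in `I`, so `Δg` is the
normal derivative there, which is `0`. Hence the left side is `k · H`. The energy is positive
because `g` takes the values `0` on `L` and `k` on `R`, so along a path from `L` to `R` some edge
joins vertices with different values.
-/

section Network

variable [Fintype V] (G : SimpleGraph V) [DecidableRel G.Adj] (c : V → V → ℝ)

noncomputable def netEnergy (u : V → ℝ) : ℝ :=
  ∑ x, ∑ y ∈ G.neighborFinset x, c x y * (u x - u y) ^ 2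

theorem sum_neighborFinset_comm (f : V → V → ℝ) :
    ∑ x, ∑ y ∈ G.neighborFinset x, f x y = ∑ x, ∑ y ∈ G.neighborFinset x, f y x :=
  sum_comm' fun x y => by simp [G.adj_comm]

theorem two_mul_sum_mul_netLap (hsymm : ∀ x y, c x y = c y x) (u : V → ℝ) :
    2 * ∑ x, u x * netLap G c u x = netEnergy G c u := by
  have hswap : ∑ x, u x * netLap G c u x
      = ∑ x, ∑ y ∈ G.neighborFinset x, -(c x y * u y * (u x - u y)) := by
    simp only [netLap, mul_sum]
    rw [sum_neighborFinset_comm]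
    refine sum_congr rfl fun x _ => sum_congr rfl fun y _ => ?_
    rw [hsymm]
    ring
  calc 2 * ∑ x, u x * netLap G c u x
      = ∑ x, u x * netLap G c u x
        + ∑ x, ∑ y ∈ G.neighborFinset x, -(c x y * u y * (u x - u y)) := by rw [two_mul, ← hswap]
    _ = netEnergy G c u := by
      simp only [netLap, netEnergy, mul_sum, ← sum_add_distrib]
      exact sum_congr rfl fun x _ => sum_congr rfl fun y _ => by ring

theorem netEnergy_pos (hpos : ∀ x y, G.Adj x y → 0 < c x y) (hconn : G.Preconnected)
    {u : V → ℝ} {a b : V} (hab : u a ≠ u b) : 0 < netEnergy G c u := by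
  obtain ⟨p⟩ := hconn a b
  obtain ⟨d, -, hfst, hsnd⟩ := p.exists_boundary_dart {x | u x = u a} rfl (Ne.symm hab)
  have hterm_nonneg : ∀ x, ∀ y ∈ G.neighborFinset x, 0 ≤ c x y * (u x - u y) ^ 2 :=
    fun x y hy => mul_nonneg (hpos x y ((G.mem_neighborFinset x y).1 hy)).le (sq_nonneg _)
  have hdiff : u d.fst - u d.snd ≠ 0 := sub_ne_zero.2 fun h => hsnd (h.symm.trans hfst)
  refine sum_pos' (fun x _ => sum_nonneg (hterm_nonneg x)) ⟨d.fst, mem_univ _, ?_⟩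
  refine sum_pos' (hterm_nonneg d.fst) ⟨d.snd, (G.mem_neighborFinset _ _).2 d.adj, ?_⟩
  exact mul_pos (hpos _ _ d.adj) (by positivity)

theorem netNormalDeriv_eq_netLap [DecidableEq V] {F : Finset V} {x : V}
    (hF : ∀ y, G.Adj x y → y ∈ F) (u : V → ℝ) : netNormalDeriv G c F u x = netLap G c u x := by
  rw [netNormalDeriv, netLap, filter_true_of_mem fun y hy => hF y ((G.mem_neighborFinset x y).1 hy)]

end Network

theorem dn_bvp_flux_positive_general [Fintype V] [DecidableEq V]
    (G : SimpleGraph V) [DecidableRel G.Adj] (c : V → V → ℝ)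
    (hsymm : ∀ x y, c x y = c y x)
    (hpos : ∀ x y, G.Adj x y → 0 < c x y)
    (hconn : G.Connected)
    (I L R N : Finset V)
    (hLne : L.Nonempty) (hRne : R.Nonempty)
    (hcover : I ∪ L ∪ R ∪ N = univ)
    (hbdry_nonadj : ∀ x ∈ L ∪ R ∪ N, ∀ y ∈ L ∪ R ∪ N, ¬ G.Adj x y)
    (k : ℝ) (hk : 0 < k) (g : V → ℝ)
    (hgR : ∀ x ∈ R, g x = k) (hgL : ∀ x ∈ L, g x = 0)
    (hharm : ∀ x ∈ I, netLap G c g x = 0)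
    (hneu : ∀ x ∈ N, netNormalDeriv G c I g x = 0) :
    0 < ∑ x ∈ R, netNormalDeriv G c I g x := by
  have hnbr : ∀ x ∈ L ∪ R ∪ N, ∀ y, G.Adj x y → y ∈ I := by
    intro x hx y hxy
    by_contra hyI
    have hy : y ∈ I ∪ L ∪ R ∪ N := hcover ▸ mem_univ y
    exact hbdry_nonadj x hx y (by simpa [hyI, or_assoc] using hy) hxy
  have hND : ∀ x ∈ L ∪ R ∪ N, netNormalDeriv G c I g x = netLap G c g x :=
    fun x hx => netNormalDeriv_eq_netLap G c (hnbr x hx) g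
  have hgreen : ∑ x, g x * netLap G c g x = k * ∑ x ∈ R, netNormalDeriv G c I g x := by
    rw [← sum_subset (subset_univ R), mul_sum]
    · exact sum_congr rfl fun x hx => by rw [hgR x hx, hND x (by simp [hx])]
    · intro x _ hxR
      have hx : x ∈ I ∪ L ∪ R ∪ N := hcover ▸ mem_univ x
      simp only [mem_union, hxR, or_false] at hx
      rcases hx with (hxI | hxL) | hxN
      · rw [hharm x hxI, mul_zero]
      · rw [hgL x hxL, zero_mul]
      · rw [← hND x (by simp [hxN]), hneu x hxN, mul_zero]
  obtain ⟨a, ha⟩ := hLne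
  obtain ⟨b, hb⟩ := hRne
  have hab : g a ≠ g b := by rw [hgL a ha, hgR b hb]; exact hk.ne
  have henergy : 0 < netEnergy G c g := netEnergy_pos G c hpos hconn.preconnected hab
  rw [← two_mul_sum_mul_netLap G c hsymm, hgreen] at henergy
  exact pos_of_mul_pos_right (pos_of_mul_pos_right henergy zero_le_two) hk.le

/-- Strict positivity of the flux: the height `H = Σ_{x ∈ R} ∂g/∂n(I)(x)` of the
uniformizing rectangle is positive. -/
theorem dn_bvp_flux_positive [Fintype V] [DecidableEq V]
    (G : SimpleGraph V) [DecidableRel G.Adj] (c : V → V → ℝ)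
    (hsymm : ∀ x y, c x y = c y x)
    (hpos : ∀ x y, G.Adj x y → 0 < c x y)
    (hzero : ∀ x y, ¬ G.Adj x y → c x y = 0)
    (hconn : G.Connected)
    (I L R N : Finset V)
    (hLne : L.Nonempty) (hRne : R.Nonempty)
    (hIL : Disjoint I L) (hIR : Disjoint I R) (hIN : Disjoint I N)
    (hLR : Disjoint L R) (hLN : Disjoint L N) (hRN : Disjoint R N)
    (hcover : I ∪ L ∪ R ∪ N = univ)
    (hbdry_nonadj : ∀ x ∈ L ∪ R ∪ N, ∀ y ∈ L ∪ R ∪ N, ¬ G.Adj x y)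
    (hbdry_adj : ∀ x ∈ L ∪ R ∪ N, ∃ y ∈ I, G.Adj x y)
    (k : ℝ) (hk : 0 < k) (g : V → ℝ)
    (hgR : ∀ x ∈ R, g x = k) (hgL : ∀ x ∈ L, g x = 0)
    (hharm : ∀ x ∈ I, netLap G c g x = 0)
    (hneu : ∀ x ∈ N, netNormalDeriv G c I g x = 0) :
    0 < ∑ x ∈ R, netNormalDeriv G c I g x :=
  dn_bvp_flux_positive_general G c hsymm hpos hconn I L R N hLne hRne hcover hbdry_nonadj k hk g hgR
    hgL hharm hneu
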